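/- arXiv:1011.4247 — 2 statements merged into one kernel-verified Lean document; each statement's English description precedes it below -/
import Mathlib

section
/- If d is odd and m_0 = 4a + 2, then the sum of the degrees of the 9 minimal generators of the defining ideal P (namely 2m_0 + kd for k ∈ {2,3,4,4,5,6} and m_0(a+d+1) + kd for k ∈ {0,1,2}) is odd; consequently these degrees cannot be the degrees of the 2×2 minors of a 3×3 matrix of homogeneous forms (whose degree sum is always even). -/
/-- If `d` is odd and `m_0 = 4a+2`, the sum of the degrees of the 9 minimal
generators of `P` is odd; consequently these degrees cannot be the degrees of
the 2×2 minors of a 3×3 matrix of homogeneous forms, whose degree sum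
`Σ_{i,j} ((r_1+r_2+r_3−r_i) + (c_1+c_2+c_3−c_j))` is always even. -/
theorem stmt_11 (a d m0 : ℕ) (ha : 1 ≤ a) (hd : 1 ≤ d) (hdodd : Odd d)
    (hm0 : m0 = 4 * a + 2) :
    Odd ((2 * m0 + 2 * d) + (2 * m0 + 3 * d) + (2 * m0 + 4 * d) + (2 * m0 + 4 * d)
        + (2 * m0 + 5 * d) + (2 * m0 + 6 * d)
        + m0 * (a + d + 1) + (m0 * (a + d + 1) + d) + (m0 * (a + d + 1) + 2 * d)) ∧
    ∀ r c : Fin 3 → ℕ,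
      ((2 * m0 + 2 * d) + (2 * m0 + 3 * d) + (2 * m0 + 4 * d) + (2 * m0 + 4 * d)
        + (2 * m0 + 5 * d) + (2 * m0 + 6 * d)
        + m0 * (a + d + 1) + (m0 * (a + d + 1) + d) + (m0 * (a + d + 1) + 2 * d)) ≠
      ∑ i : Fin 3, ∑ j : Fin 3,
        ((r 0 + r 1 + r 2 - r i) + (c 0 + c 1 + c 2 - c j)) := by
  obtain ⟨k, hk⟩ := hdodd
  have hM : m0 * (a + d + 1) = 2 * ((2 * a + 1) * (a + d + 1)) := by
    subst hm0; ring
  constructor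
  · rw [Nat.odd_iff]; omega
  · intro r c h
    simp only [Fin.sum_univ_three] at h
    omega
end

section
/- Each 2×2 minor of the matrix B (with columns (X_n^a, X_0^{a+d}), and (X_{i−1}, X_{b+i−1}) for i = 1,...,n−b+1) taken from two columns i < j with i ≥ 2 (both not the first column) equals X_{i−2}X_{b+j−2} − X_{j−2}X_{b+i−2}, and this polynomial lies in the ideal generated by {X_p X_{q+1} − X_q X_{p+1} : 0 ≤ p < q ≤ n−1}. -/
/-
Write `x_m` for the variables and `N` for the largest index. The step `c → c + 1` is the identity
`x_u x_{v+c+1} - x_v x_{u+c+1} = (x_u x_{v+c+1} - x_{v+c} x_{u+1}) + (x_{u+1} x_{v+c} - x_v x_{u+1+c})`: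
the first bracket is a generator `x_p x_{q+1} - x_q x_{p+1}` with `p = u`, `q = v + c`, and the
second is the minor for the pair `(u + 1, v)` with shift `c`. Induction on `c` therefore puts every
"shifted" minor `x_u x_{v+c} - x_v x_{u+c}` with `v + c ≤ N` in the ideal of adjacent minors; the
minors of `B` avoiding the first column are the case `c = b`.
-/

theorem shifted_minor_mem_of_adjacent_minor_mem {R : Type*} [CommRing R] (x : ℕ → R)
    (I : Ideal R) (N : ℕ)
    (hI : ∀ p q, p < q → q + 1 ≤ N → x p * x (q + 1) - x q * x (p + 1) ∈ I)
    (c : ℕ) : ∀ u v, u ≤ v → v + c ≤ N → x u * x (v + c) - x v * x (u + c) ∈ I := by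
  induction c with
  | zero => intro u v _ _; simp [mul_comm]
  | succ c ih =>
    intro u v huv hvc
    obtain rfl | huv := huv.eq_or_lt
    · simp
    have hgen := hI u (v + c) (by omega) (by omega)
    have hshift := ih (u + 1) v huv (by omega)
    convert I.add_mem hgen hshift using 1
    rw [show u + 1 + c = u + (c + 1) by omega, ← add_assoc v]
    ring

/-- Each 2×2 minor of `B` taken from two columns `i < j` with `i ≥ 2` (neither
being the first column) equals `X_{i−2}X_{b+j−2} − X_{j−2}X_{b+i−2}`, and this
polynomial lies in the ideal generated by
`{X_p X_{q+1} − X_q X_{p+1} : 0 ≤ p < q ≤ n−1}`. -/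
theorem stmt_18 (k : Type*) [Field k] (n b : ℕ) (hbn : b ≤ n)
    (i j : ℕ) (hi : 2 ≤ i) (hij : i < j) (hj : j ≤ n - b + 2) :
    (MvPolynomial.X (⟨i - 2, by omega⟩ : Fin (n + 1)) *
        MvPolynomial.X (⟨b + j - 2, by omega⟩ : Fin (n + 1)) -
      MvPolynomial.X (⟨j - 2, by omega⟩ : Fin (n + 1)) *
        MvPolynomial.X (⟨b + i - 2, by omega⟩ : Fin (n + 1)) :
          MvPolynomial (Fin (n + 1)) k) ∈
      Ideal.span {f : MvPolynomial (Fin (n + 1)) k |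
        ∃ p q : ℕ, ∃ _ : p < q, ∃ _ : q ≤ n - 1,
          f = MvPolynomial.X (⟨p, by omega⟩ : Fin (n + 1)) *
                MvPolynomial.X (⟨q + 1, by omega⟩ : Fin (n + 1)) -
              MvPolynomial.X (⟨q, by omega⟩ : Fin (n + 1)) *
                MvPolynomial.X (⟨p + 1, by omega⟩ : Fin (n + 1))} := by
  -- indexing by `ℕ` removes the bound proofs from the indices; the value `0` beyond `n` is never used
  let x : ℕ → MvPolynomial (Fin (n + 1)) k := fun m =>
    if hm : m < n + 1 then MvPolynomial.X ⟨m, hm⟩ else 0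
  have hx (m : ℕ) (hm : m < n + 1) : MvPolynomial.X ⟨m, hm⟩ = x m := by simp only [x, dif_pos hm]
  simp only [hx]
  rw [show b + j - 2 = j - 2 + b by omega, show b + i - 2 = i - 2 + b by omega]
  refine shifted_minor_mem_of_adjacent_minor_mem x _ n ?_ b (i - 2) (j - 2) (by omega) (by omega)
  exact fun p q hpq hq => Ideal.subset_span ⟨p, q, hpq, by omega, rfl⟩
end
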